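/- Iterated recursion bound for the safe sets: for all times t₀ ≤ t ≤ i, Ŝ_t ∩ ⋂_{j=t}^{i−1} G_j^{j+2}(l, Ŝ_j) ⊆ Ŝ_i (where the intersection over an empty index range is the whole state set S). -/
import Mathlib


/-- Combined Lipschitz bound `L(s, s', τ, τ') = L_s·d_s(s,s') + L_t·|τ − τ'|·Δ`. -/
def Lfun {S : Type*} (ds : S → S → ℝ) (Ls Lt Δ : ℝ) (s s' : S) (τ τ' : ℕ) : ℝ :=
  Ls * ds s s' + Lt * |(τ : ℝ) - (τ' : ℝ)| * Δ

/-- One-step safe set `S_t(l, X)` (for `t ≥ 1`). -/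
def oneStepSafe {S : Type*} (ds : S → S → ℝ) (Ls Lt Δ h : ℝ) (l : ℕ → S → ℝ)
    (X : Set S) (t : ℕ) : Set S :=
  {s | ∃ s' ∈ X, l (t - 1) s' - Lfun ds Ls Lt Δ s s' t (t - 1) ≥ h}

/-- Conservative safe set `G_{τ'}^{τ}(l, X)` (for `τ' < τ`). -/
def consSafe {S : Type*} (ds : S → S → ℝ) (Ls Lt Δ h : ℝ) (l : ℕ → S → ℝ)
    (X : Set S) (τ' τ : ℕ) : Set S :=
  {s | ∃ s' ∈ X, l τ' s' - Lfun ds Ls Lt Δ s s' τ τ' ≥ h}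
/-- One-step reachable set: `X` together with the states reachable from `X` in one step. -/
def Rreach {S A : Type*} (f : S → A → S) (X : Set S) : Set S :=
  X ∪ {s | ∃ s' ∈ X, ∃ a : A, s = f s' a}

/-- One-step returnable set: `X` together with the states from which `X` can be
reached in one step. -/
def Rret {S A : Type*} (f : S → A → S) (X : Set S) : Set S :=
  X ∪ {s | ∃ a : A, f s a ∈ X}

/-- The recursively defined safe sets: `hatS … i = Ŝ_i`, with `Ŝ_{t₀} = X₀` and, for
`i > t₀`, `Ŝ_i = S_i(l, Ŝ_{i−1}) ∩ R_reach(Ŝ_{i−1}) ∩ R_ret(G_{i−1}^{i+1}(l, Ŝ_{i−1}))`. -/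
def hatS {S A : Type*} (f : S → A → S) (ds : S → S → ℝ) (Ls Lt Δ h : ℝ)
    (l : ℕ → S → ℝ) (t₀ : ℕ) (X₀ : Set S) : ℕ → Set S := fun i =>
  Nat.rec X₀
    (fun n prev =>
      oneStepSafe ds Ls Lt Δ h l prev (t₀ + n + 1) ∩ Rreach f prev ∩
        Rret f (consSafe ds Ls Lt Δ h l prev (t₀ + n) (t₀ + n + 2)))
    (i - t₀)

lemma hatS_succ {S A : Type*} (f : S → A → S) (ds : S → S → ℝ) (Ls Lt Δ h : ℝ)
    (l : ℕ → S → ℝ) (t₀ : ℕ) (X₀ : Set S) {i : ℕ} (hi : t₀ ≤ i) :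
    hatS f ds Ls Lt Δ h l t₀ X₀ (i + 1) =
      oneStepSafe ds Ls Lt Δ h l (hatS f ds Ls Lt Δ h l t₀ X₀ i) (i + 1) ∩
        Rreach f (hatS f ds Ls Lt Δ h l t₀ X₀ i) ∩
        Rret f (consSafe ds Ls Lt Δ h l (hatS f ds Ls Lt Δ h l t₀ X₀ i) i (i + 2)) := by
  have h1 : i + 1 - t₀ = (i - t₀) + 1 := by omega
  have h2 : t₀ + (i - t₀) = i := by omega
  simp only [hatS, h1, h2]

theorem hatS_iterated_recursion_bound {S A : Type*} [Fintype S] [Fintype A]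
    (f : S → A → S)
    (ds : S → S → ℝ) (hds_nonneg : ∀ s s' : S, 0 ≤ ds s s')
    (hds_refl : ∀ s : S, ds s s = 0)
    (Ls Lt Δ : ℝ) (hLs : 0 ≤ Ls) (hLt : 0 ≤ Lt) (hΔ : 0 ≤ Δ) (h : ℝ)
    (l : ℕ → S → ℝ) (t₀ : ℕ) (ht₀ : 1 ≤ t₀) (X₀ : Set S)
    (t i : ℕ) (ht : t₀ ≤ t) (hti : t ≤ i) :
    hatS f ds Ls Lt Δ h l t₀ X₀ t ∩
        ⋂ j ∈ Finset.Ico t i,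
          consSafe ds Ls Lt Δ h l (hatS f ds Ls Lt Δ h l t₀ X₀ j) j (j + 2) ⊆
      hatS f ds Ls Lt Δ h l t₀ X₀ i := by
  induction i, hti using Nat.le_induction with
  | base =>
    intro s hs
    exact hs.1
  | succ i hti ih =>
    intro s hs
    have hsi : s ∈ hatS f ds Ls Lt Δ h l t₀ X₀ i := by
      apply ih
      refine ⟨hs.1, ?_⟩
      have := hs.2
      simp only [Set.mem_iInter] at this ⊢
      intro j hj
      exact this j (Finset.mem_Ico.mpr ⟨(Finset.mem_Ico.mp hj).1, by
        have := (Finset.mem_Ico.mp hj).2; omega⟩)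
    have hcons : s ∈ consSafe ds Ls Lt Δ h l (hatS f ds Ls Lt Δ h l t₀ X₀ i) i (i + 2) := by
      have := hs.2
      simp only [Set.mem_iInter] at this
      exact this i (Finset.mem_Ico.mpr ⟨hti, by omega⟩)
    rw [hatS_succ f ds Ls Lt Δ h l t₀ X₀ (le_trans ht hti)]
    obtain ⟨s', hs', hle⟩ := hcons
    refine ⟨⟨⟨s', hs', ?_⟩, Or.inl hsi⟩, Or.inl ⟨s', hs', hle⟩⟩
    have hL : Lfun ds Ls Lt Δ s s' (i + 1) (i + 1 - 1) ≤ Lfun ds Ls Lt Δ s s' (i + 2) i := by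
      simp only [Lfun, Nat.add_sub_cancel]
      have h1 : |((i : ℝ) + 1) - i| = 1 := by
        rw [show ((i : ℝ) + 1) - i = 1 by ring]; norm_num
      have h2 : |((i : ℝ) + 2) - i| = 2 := by
        rw [show ((i : ℝ) + 2) - i = 2 by ring]; norm_num
      push_cast [h1, h2]
      nlinarith [mul_nonneg hLt hΔ]
    have : l (i + 1 - 1) s' = l i s' := by norm_num
    rw [this]
    linarith
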